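/- If P: A → A is a filtration-preserving linear map that is moreover an idempotent algebra homomorphism, then the BCH-recursion has the closed form χ(u) = u + BCH(−P(u), u) for all u ∈ A_1; in particular P(χ(u)) = P(u). -/

import Mathlib

/-!
Evaluating a formal power series at an element of `F 1` is multiplicative and compatible with
substitution, because both can be checked modulo each `F N` on polynomial truncations. The formal
identities `log ∘ (exp - 1) = X = (exp - 1) ∘ log` therefore make `expS` and `logS` mutually
inverse between `F 1` and `1 + F 1`.

Put `x = P (χ u)` and `y = χ u - x`, so that `P x = x` and `P y = 0`. The recursion says
`logS (expS x * expS y) = u`, i.e. `expS x * expS y = expS u`. A continuous multiplicative `P`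
commutes with `exp - 1`, so applying `P` to `expS x * expS y - 1` gives `expS (P u) = expS x`,
hence `P u = x`, and then `y = logS (expS (-P u) * expS u)`.
-/

open scoped BigOperators

noncomputable def expS (K : Type*) {A : Type*} [Field K] [CharZero K] [Ring A] [Algebra K A]
    [UniformSpace A] (a : A) : A :=
  ∑' n : ℕ, ((n.factorial : K)⁻¹) • a ^ n

noncomputable def logS (K : Type*) {A : Type*} [Field K] [CharZero K] [Ring A] [Algebra K A]
    [UniformSpace A] (a : A) : A :=
  ∑' n : ℕ, (((-1 : K) ^ n) * ((n : K) + 1)⁻¹) • (a - 1) ^ (n + 1)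

noncomputable def BCHs (K : Type*) {A : Type*} [Field K] [CharZero K] [Ring A] [Algebra K A]
    [UniformSpace A] (x y : A) : A :=
  logS K (expS K x * expS K y) - x - y

/-- A complete decreasing multiplicative filtration defining the topology of `A`. -/
def IsCompleteFiltration (K : Type*) {A : Type*} [Field K] [CharZero K] [Ring A] [Algebra K A]
    [UniformSpace A] (F : ℕ → Submodule K A) : Prop :=
  F 0 = ⊤ ∧ (∀ n, F (n + 1) ≤ F n) ∧
    (∀ m n : ℕ, ∀ x ∈ F m, ∀ y ∈ F n, x * y ∈ F (m + n)) ∧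
    (∀ n, IsOpen ((F n : Set A))) ∧
    (∀ U ∈ nhds (0 : A), ∃ n, ((F n : Set A)) ⊆ U)

open PowerSeries

namespace PowerSeries

section FormalIdentities

variable {K : Type*} [Field K] [CharZero K]

theorem one_add_X_mul_derivative_log : (1 + X) * d⁄dX K (log K) = 1 := by
  ext n
  rw [deriv_log, add_mul, one_mul, map_add]
  rcases n with _ | n
  · simp
  · rw [coeff_succ_X_mul]
    simp [pow_succ]

theorem log_subst_exp_sub_one : (log K).subst (exp K - 1) = X := by
  have hE : HasSubst (exp K - 1) := HasSubst.exp_sub_one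
  refine derivative.ext ?_ ?_
  · have h := congrArg (substAlgHom hE) (one_add_X_mul_derivative_log (K := K))
    rw [map_mul, map_add, map_one, substAlgHom_X, coe_substAlgHom, add_sub_cancel] at h
    rw [derivative_subst hE, map_sub, derivative_exp, derivative_one, sub_zero, derivative_X,
      mul_comm, h]
  · have hc : constantCoeff (exp K - 1) = 0 := by simp [constantCoeff_exp]
    rw [constantCoeff_X]
    exact constantCoeff_subst_eq_zero hc _ (constantCoeff_log (A := K))

/-- `exp - 1` has a compositional right inverse, so its left inverse `log` is two-sided. -/
theorem exp_sub_one_subst_log : (exp K - 1).subst (log K) = X := by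
  have hE : HasSubst (exp K - 1) := HasSubst.exp_sub_one
  have hc : constantCoeff (exp K - 1) = 0 := by simp [constantCoeff_exp]
  have hu : IsUnit (coeff 1 (exp K - 1)) := by simp [coeff_exp]
  set S := (exp K - 1).substInvOfIsUnit hu
  have hS : HasSubst S := HasSubst.substInvOfIsUnit _ hu
  have hLS : log K = S := calc
    log K = (log K).subst ((exp K - 1).subst S) := by
      rw [subst_substInvOfIsUnit_right _ hc, X_subst]
    _ = S := by rw [← subst_comp_subst_apply hE hS, log_subst_exp_sub_one, subst_X hS]
  rw [hLS, subst_substInvOfIsUnit_right _ hc]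

end FormalIdentities

section Truncation

variable {R : Type*} [CommRing R]

theorem X_pow_dvd_sub_trunc (N : ℕ) (f : R⟦X⟧) : X ^ N ∣ f - (trunc N f : R⟦X⟧) := by
  rw [X_pow_dvd_iff]
  intro m hm
  simp [coeff_trunc, hm]

theorem _root_.Polynomial.coe_comp (p r : Polynomial R) :
    ((p.comp r : Polynomial R) : R⟦X⟧) = Polynomial.aeval (r : R⟦X⟧) p := by
  rw [Polynomial.comp_eq_aeval]
  simpa using (Polynomial.aeval_algHom_apply (Polynomial.coeToPowerSeries.algHom R) r p).symm

theorem X_pow_dvd_subst_sub_trunc_comp_trunc {f g : R⟦X⟧} (hg : constantCoeff g = 0) (N : ℕ) :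
    X ^ N ∣ f.subst g - ((trunc N f).comp (trunc N g) : R⟦X⟧) := by
  have hgs : HasSubst g := HasSubst.of_constantCoeff_zero' hg
  obtain ⟨h, hh⟩ := X_pow_dvd_sub_trunc N f
  have h1 : f.subst g - (trunc N f : R⟦X⟧).subst g = g ^ N * h.subst g := by
    rw [← subst_sub hgs, hh, subst_mul hgs, subst_pow hgs, subst_X hgs]
  have h2 : X ^ N ∣ (trunc N f : R⟦X⟧).subst g - ((trunc N f).comp (trunc N g) : R⟦X⟧) := by
    rw [← Ideal.mem_span_singleton, ← Ideal.Quotient.eq, subst_coe hgs,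
      Polynomial.coe_comp, ← Ideal.Quotient.mkₐ_eq_mk R,
      ← Polynomial.aeval_algHom_apply, ← Polynomial.aeval_algHom_apply, Ideal.Quotient.mkₐ_eq_mk]
    congr 2
    rw [Ideal.Quotient.eq, Ideal.mem_span_singleton]
    exact X_pow_dvd_sub_trunc N g
  rw [← sub_add_sub_cancel _ ((trunc N f : R⟦X⟧).subst g), h1]
  exact dvd_add (dvd_mul_of_dvd_left (pow_dvd_pow_of_dvd (X_dvd_iff.mpr hg) N) _) h2

end Truncation

end PowerSeries

namespace IsCompleteFiltration

variable {K : Type*} [Field K] [CharZero K] {A : Type*} [Ring A] [Algebra K A] [UniformSpace A]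
  {F : ℕ → Submodule K A}

theorem antitone (hF : IsCompleteFiltration K F) : Antitone F :=
  antitone_nat_of_succ_le hF.2.1

theorem mul_mem_left (hF : IsCompleteFiltration K F) {n : ℕ} {y : A} (hy : y ∈ F n) (x : A) :
    x * y ∈ F n := by
  simpa using hF.2.2.1 0 n x (hF.1 ▸ Submodule.mem_top) y hy

theorem mul_mem_right (hF : IsCompleteFiltration K F) {n : ℕ} {x : A} (hx : x ∈ F n) (y : A) :
    x * y ∈ F n := by
  simpa using hF.2.2.1 n 0 x hx y (hF.1 ▸ Submodule.mem_top)

theorem pow_mem (hF : IsCompleteFiltration K F) {a : A} (ha : a ∈ F 1) (n : ℕ) : a ^ n ∈ F n := by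
  induction n with
  | zero => simp [hF.1]
  | succ n ih => simpa [pow_succ] using hF.2.2.1 n 1 _ ih a ha

theorem mul_sub_one_mem (hF : IsCompleteFiltration K F) {a b : A} (ha : a - 1 ∈ F 1)
    (hb : b - 1 ∈ F 1) : a * b - 1 ∈ F 1 := by
  rw [show a * b - 1 = (a - 1) * b + (b - 1) by noncomm_ring]
  exact add_mem (hF.mul_mem_right ha b) hb

theorem mul_sub_mul_mem (hF : IsCompleteFiltration K F) {n : ℕ} {x x' y y' : A}
    (hx : x - x' ∈ F n) (hy : y - y' ∈ F n) : x * y - x' * y' ∈ F n := by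
  rw [show x * y - x' * y' = (x - x') * y + x' * (y - y') by noncomm_ring]
  exact add_mem (hF.mul_mem_right hx y) (hF.mul_mem_left hy x')

theorem aeval_sub_aeval_mem (hF : IsCompleteFiltration K F) {n : ℕ} {x y : A}
    (h : x - y ∈ F n) (q : Polynomial K) : Polynomial.aeval x q - Polynomial.aeval y q ∈ F n := by
  induction q using Polynomial.induction_on' with
  | add p r hp hr =>
    rw [map_add, map_add, add_sub_add_comm]
    exact add_mem hp hr
  | monomial k c =>
    have hpow : x ^ k - y ^ k ∈ F n := by
      induction k with
      | zero => simp
      | succ k ih => simpa only [pow_succ] using hF.mul_sub_mul_mem ih h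
    rw [Polynomial.aeval_monomial, Polynomial.aeval_monomial, ← mul_sub]
    exact hF.mul_mem_left hpow _

theorem aeval_mem_of_X_pow_dvd (hF : IsCompleteFiltration K F) {a : A} (ha : a ∈ F 1) {n : ℕ}
    {q : Polynomial K} (hq : Polynomial.X ^ n ∣ q) : Polynomial.aeval a q ∈ F n := by
  obtain ⟨s, rfl⟩ := hq
  rw [map_mul, map_pow, Polynomial.aeval_X]
  exact hF.mul_mem_right (hF.pow_mem ha n) _

theorem eq_of_forall_sub_mem [T2Space A] (hF : IsCompleteFiltration K F) {x y : A}
    (h : ∀ n, x - y ∈ F n) : x = y := by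
  by_contra hne
  obtain ⟨n, hn⟩ := hF.2.2.2.2 {x - y}ᶜ
    (isOpen_compl_singleton.mem_nhds (by simpa [eq_comm, sub_eq_zero] using hne))
  exact hn (h n) rfl

variable [IsUniformAddGroup A]

theorem tsum_mem (hF : IsCompleteFiltration K F) {ι : Type*} {n : ℕ} {t : ι → A}
    (ht : ∀ i, t i ∈ F n) : ∑' i, t i ∈ F n :=
  _root_.tsum_mem (AddSubgroup.isClosed_of_isOpen (F n).toAddSubgroup (hF.2.2.2.1 n)) ht

theorem continuous_of_mapsTo (hF : IsCompleteFiltration K F) (P : A →ₗ[K] A)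
    (hP : ∀ n, ∀ x ∈ F n, P x ∈ F n) : Continuous P := by
  refine continuous_of_continuousAt_zero P fun U hU => ?_
  rw [map_zero] at hU
  obtain ⟨n, hn⟩ := hF.2.2.2.2 U hU
  exact Filter.mem_map.mpr <| Filter.mem_of_superset ((hF.2.2.2.1 n).mem_nhds (zero_mem _))
    fun x hx => hn (hP n x hx)

theorem summable_of_mem [CompleteSpace A] (hF : IsCompleteFiltration K F) {t : ℕ → A}
    (ht : ∀ n, t n ∈ F n) : Summable t := by
  have : NonarchimedeanAddGroup A :=
    { is_nonarchimedean := fun U hU => by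
        obtain ⟨n, hn⟩ := hF.2.2.2.2 U hU
        exact ⟨⟨(F n).toAddSubgroup, hF.2.2.2.1 n⟩, hn⟩ }
  refine NonarchimedeanAddGroup.summable_of_tendsto_cofinite_zero fun U hU => ?_
  obtain ⟨n, hn⟩ := hF.2.2.2.2 U hU
  rw [Nat.cofinite_eq_atTop]
  exact Filter.mem_atTop_sets.mpr ⟨n, fun m hm => hn (hF.antitone hm (ht m))⟩

end IsCompleteFiltration

noncomputable def seriesEval {R A : Type*} [CommSemiring R] [Semiring A] [Algebra R A]
    [TopologicalSpace A] (f : R⟦X⟧) (a : A) : A :=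
  ∑' n, coeff n f • a ^ n

section SeriesEval

variable {R A : Type*} [CommSemiring R] [Semiring A] [Algebra R A] [TopologicalSpace A]

@[simp]
theorem seriesEval_one (a : A) : seriesEval (1 : R⟦X⟧) a = 1 := by
  rw [seriesEval, tsum_eq_single 0 fun n hn => by simp [coeff_one, hn]]
  simp

@[simp]
theorem seriesEval_X (a : A) : seriesEval (X : R⟦X⟧) a = a := by
  rw [seriesEval, tsum_eq_single 1 fun n hn => by simp [coeff_X, hn]]
  simp

theorem seriesEval_rescale (c : R) (f : R⟦X⟧) (a : A) :
    seriesEval (rescale c f) a = seriesEval f (c • a) := by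
  simp only [seriesEval, coeff_rescale, smul_pow, smul_smul, mul_comm]

end SeriesEval

theorem expS_eq_seriesEval {K A : Type*} [Field K] [CharZero K] [Ring A] [Algebra K A]
    [UniformSpace A] (a : A) : expS K a = seriesEval (exp K) a := by
  simp [expS, seriesEval, coeff_exp]

theorem expS_zero {K A : Type*} [Field K] [CharZero K] [Ring A] [Algebra K A] [UniformSpace A] :
    expS K (0 : A) = 1 := by
  rw [expS, tsum_eq_single 0 fun n hn => by simp [hn]]
  simp

namespace IsCompleteFiltration

variable {K : Type*} [Field K] [CharZero K] {A : Type*} [Ring A] [Algebra K A] [UniformSpace A]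
  [IsUniformAddGroup A] [CompleteSpace A] {F : ℕ → Submodule K A}

theorem summable_coeff_smul_pow (hF : IsCompleteFiltration K F) {a : A} (ha : a ∈ F 1)
    (f : K⟦X⟧) : Summable fun n => coeff n f • a ^ n :=
  hF.summable_of_mem fun n => Submodule.smul_mem _ _ (hF.pow_mem ha n)

variable [T2Space A]

theorem seriesEval_sub (hF : IsCompleteFiltration K F) {a : A} (ha : a ∈ F 1) (f g : K⟦X⟧) :
    seriesEval (f - g) a = seriesEval f a - seriesEval g a := by
  simp only [seriesEval, map_sub, sub_smul]
  exact (hF.summable_coeff_smul_pow ha f).tsum_sub (hF.summable_coeff_smul_pow ha g)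

theorem seriesEval_sub_aeval_trunc_mem (hF : IsCompleteFiltration K F) {a : A} (ha : a ∈ F 1)
    (f : K⟦X⟧) (N : ℕ) : seriesEval f a - Polynomial.aeval a (trunc N f) ∈ F N := by
  have htrunc : Polynomial.aeval a (trunc N f) = ∑ i ∈ Finset.range N, coeff i f • a ^ i := by
    simp [Polynomial.aeval_def, eval₂_trunc_eq_sum_range, Algebra.smul_def]
  rw [seriesEval, ← (hF.summable_coeff_smul_pow ha f).sum_add_tsum_nat_add N, htrunc,
    add_sub_cancel_left]
  exact hF.tsum_mem fun i =>
    Submodule.smul_mem _ _ (hF.antitone (Nat.le_add_left N i) (hF.pow_mem ha _))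

theorem seriesEval_mem (hF : IsCompleteFiltration K F) {a : A} (ha : a ∈ F 1) {f : K⟦X⟧}
    (hf : constantCoeff f = 0) : seriesEval f a ∈ F 1 := by
  simpa [trunc_one_left, hf] using hF.seriesEval_sub_aeval_trunc_mem ha f 1

theorem seriesEval_eq_of_forall (hF : IsCompleteFiltration K F) {a : A} (ha : a ∈ F 1)
    {f : K⟦X⟧} {y : A}
    (h : ∀ N, ∃ q : Polynomial K, X ^ N ∣ f - (q : K⟦X⟧) ∧ y - Polynomial.aeval a q ∈ F N) :
    seriesEval f a = y := by
  refine hF.eq_of_forall_sub_mem fun N => ?_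
  obtain ⟨q, hfq, hyq⟩ := h N
  have hdvd : Polynomial.X ^ N ∣ trunc N f - q := by
    obtain ⟨s, hs⟩ := dvd_sub hfq (X_pow_dvd_sub_trunc N f)
    rw [sub_sub_sub_cancel_left] at hs
    rw [Polynomial.X_pow_dvd_iff]
    intro d hd
    rw [Polynomial.coeff_sub, ← Polynomial.coeff_coe, ← Polynomial.coeff_coe, ← map_sub, hs,
      coeff_X_pow_mul', if_neg (by omega)]
  have key : seriesEval f a - y = (seriesEval f a - Polynomial.aeval a (trunc N f))
      + Polynomial.aeval a (trunc N f - q) - (y - Polynomial.aeval a q) := by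
    rw [map_sub]
    abel
  rw [key]
  exact sub_mem (add_mem (hF.seriesEval_sub_aeval_trunc_mem ha f N)
    (hF.aeval_mem_of_X_pow_dvd ha hdvd)) hyq

theorem seriesEval_mul (hF : IsCompleteFiltration K F) {a : A} (ha : a ∈ F 1) (f g : K⟦X⟧) :
    seriesEval (f * g) a = seriesEval f a * seriesEval g a := by
  refine hF.seriesEval_eq_of_forall ha fun N => ⟨trunc N f * trunc N g, ?_, ?_⟩
  · rw [Polynomial.coe_mul, show f * g - trunc N f * trunc N g
      = (f - trunc N f) * g + trunc N f * (g - trunc N g) by ring]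
    exact dvd_add (dvd_mul_of_dvd_left (X_pow_dvd_sub_trunc N f) _)
      (dvd_mul_of_dvd_right (X_pow_dvd_sub_trunc N g) _)
  · rw [map_mul]
    exact hF.mul_sub_mul_mem (hF.seriesEval_sub_aeval_trunc_mem ha f N)
      (hF.seriesEval_sub_aeval_trunc_mem ha g N)

theorem seriesEval_subst (hF : IsCompleteFiltration K F) {a : A} (ha : a ∈ F 1) (f : K⟦X⟧)
    {g : K⟦X⟧} (hg : constantCoeff g = 0) :
    seriesEval (f.subst g) a = seriesEval f (seriesEval g a) := by
  have hb := hF.seriesEval_mem ha hg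
  refine hF.seriesEval_eq_of_forall ha fun N =>
    ⟨(trunc N f).comp (trunc N g), X_pow_dvd_subst_sub_trunc_comp_trunc hg N, ?_⟩
  rw [Polynomial.aeval_comp,
    ← sub_add_sub_cancel _ (Polynomial.aeval (seriesEval g a) (trunc N f))]
  exact add_mem (hF.seriesEval_sub_aeval_trunc_mem hb f N)
    (hF.aeval_sub_aeval_mem (hF.seriesEval_sub_aeval_trunc_mem ha g N) _)

theorem logS_eq_seriesEval (hF : IsCompleteFiltration K F) {z : A} (hz : z - 1 ∈ F 1) :
    logS K z = seriesEval (log K) (z - 1) := by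
  rw [seriesEval, (hF.summable_coeff_smul_pow hz _).tsum_eq_zero_add, logS]
  simp [coeff_log, pow_succ, div_eq_mul_inv]

theorem expS_sub_one_eq_seriesEval (hF : IsCompleteFiltration K F) {a : A} (ha : a ∈ F 1) :
    expS K a - 1 = seriesEval (exp K - 1) a := by
  rw [hF.seriesEval_sub ha, seriesEval_one, expS_eq_seriesEval]

theorem expS_sub_one_mem (hF : IsCompleteFiltration K F) {a : A} (ha : a ∈ F 1) :
    expS K a - 1 ∈ F 1 := by
  rw [hF.expS_sub_one_eq_seriesEval ha]
  exact hF.seriesEval_mem ha (by simp [constantCoeff_exp])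

theorem logS_expS (hF : IsCompleteFiltration K F) {a : A} (ha : a ∈ F 1) :
    logS K (expS K a) = a := by
  rw [hF.logS_eq_seriesEval (hF.expS_sub_one_mem ha), hF.expS_sub_one_eq_seriesEval ha,
    ← hF.seriesEval_subst ha _ (by simp [constantCoeff_exp]), log_subst_exp_sub_one,
    seriesEval_X]

theorem expS_logS (hF : IsCompleteFiltration K F) {z : A} (hz : z - 1 ∈ F 1) :
    expS K (logS K z) = z := by
  have hL : seriesEval (log K) (z - 1) ∈ F 1 := hF.seriesEval_mem hz constantCoeff_log
  rw [hF.logS_eq_seriesEval hz, ← sub_add_cancel (expS K _) 1,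
    hF.expS_sub_one_eq_seriesEval hL, ← hF.seriesEval_subst hz _ constantCoeff_log,
    exp_sub_one_subst_log, seriesEval_X, sub_add_cancel]

theorem expS_neg_mul_expS (hF : IsCompleteFiltration K F) {a : A} (ha : a ∈ F 1) :
    expS K (-a) * expS K a = 1 := by
  have h : rescale (-1 : K) (exp K) * exp K = 1 := by
    rw [mul_comm]
    exact exp_mul_exp_neg_eq_one
  rw [expS_eq_seriesEval, expS_eq_seriesEval, ← neg_one_smul K a, ← seriesEval_rescale,
    ← hF.seriesEval_mul ha, h, seriesEval_one]

theorem map_seriesEval (hF : IsCompleteFiltration K F) {P : A →ₗ[K] A}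
    (hP : ∀ n, ∀ x ∈ F n, P x ∈ F n) (hPmul : ∀ x y : A, P (x * y) = P x * P y) {f : K⟦X⟧}
    (hf : constantCoeff f = 0) {v : A} (hv : v ∈ F 1) :
    P (seriesEval f v) = seriesEval f (P v) := by
  have hpow : ∀ n ≥ 1, P (v ^ n) = P v ^ n := by
    intro n hn
    induction n, hn using Nat.le_induction with
    | base => simp
    | succ n _ ih => rw [pow_succ, hPmul, ih, pow_succ]
  rw [seriesEval, seriesEval, ← ((hF.summable_coeff_smul_pow hv f).hasSum.map P
    (hF.continuous_of_mapsTo P hP)).tsum_eq]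
  refine tsum_congr fun n => ?_
  rcases n with _ | n
  · simp [hf]
  · simp [hpow (n + 1) le_add_self]

theorem map_expS_sub_one (hF : IsCompleteFiltration K F) {P : A →ₗ[K] A}
    (hP : ∀ n, ∀ x ∈ F n, P x ∈ F n) (hPmul : ∀ x y : A, P (x * y) = P x * P y) {v : A}
    (hv : v ∈ F 1) : P (expS K v - 1) = expS K (P v) - 1 := by
  rw [hF.expS_sub_one_eq_seriesEval hv, hF.expS_sub_one_eq_seriesEval (hP 1 v hv),
    hF.map_seriesEval hP hPmul (by simp [constantCoeff_exp]) hv]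

theorem map_expS_mul_expS_sub_one (hF : IsCompleteFiltration K F) {P : A →ₗ[K] A}
    (hP : ∀ n, ∀ x ∈ F n, P x ∈ F n) (hPmul : ∀ x y : A, P (x * y) = P x * P y) {v w : A}
    (hv : v ∈ F 1) (hw : w ∈ F 1) :
    P (expS K v * expS K w - 1) = expS K (P v) * expS K (P w) - 1 := by
  have split (a b : A) : a * b - 1 = (a - 1) * (b - 1) + (a - 1) + (b - 1) := by noncomm_ring
  rw [split, map_add, map_add, hPmul, hF.map_expS_sub_one hP hPmul hv,
    hF.map_expS_sub_one hP hPmul hw, ← split]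

end IsCompleteFiltration

variable {K : Type*} [Field K] [CharZero K] {A : Type*} [Ring A] [Algebra K A]
  [UniformSpace A] [CompleteSpace A] [T2Space A] [IsTopologicalRing A]
  [IsUniformAddGroup A]

theorem stmt10 (F : ℕ → Submodule K A) (hF : IsCompleteFiltration K F)
    (P : A →ₗ[K] A) (hP : ∀ n, ∀ x ∈ F n, P x ∈ F n)
    (χ : A → A) (hχmem : ∀ a ∈ F 1, χ a ∈ F 1)
    (hχ : ∀ a ∈ F 1, χ a = a - BCHs K (P (χ a)) (χ a - P (χ a)))
    (hPP : ∀ x : A, P (P x) = P x) (hPmul : ∀ x y : A, P (x * y) = P x * P y) :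
    ∀ u ∈ F 1, χ u = u + BCHs K (-(P u)) u ∧ P (χ u) = P u := by
  intro u hu
  set x := P (χ u)
  set y := χ u - x
  have hx : x ∈ F 1 := hP 1 _ (hχmem u hu)
  have hy : y ∈ F 1 := sub_mem (hχmem u hu) hx
  have hlog : logS K (expS K x * expS K y) = u := by
    have h : x + y = u - (logS K (expS K x * expS K y) - x - y) :=
      (add_sub_cancel x (χ u)).trans (hχ u hu)
    rwa [sub_sub, eq_sub_iff_add_eq, add_sub_cancel] at h
  have hw : expS K x * expS K y = expS K u := by
    rw [← hlog, hF.expS_logS <|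
      hF.mul_sub_one_mem (hF.expS_sub_one_mem hx) (hF.expS_sub_one_mem hy)]
  have hPu : P u = x := by
    have h := hF.map_expS_sub_one hP hPmul hu
    rw [← hw, hF.map_expS_mul_expS_sub_one hP hPmul hx hy, hPP, map_sub, hPP, sub_self,
      expS_zero, mul_one, sub_left_inj] at h
    rw [← hF.logS_expS (hP 1 u hu), ← h]
    exact hF.logS_expS hx
  have hlogy : logS K (expS K (-P u) * expS K u) = y := by
    rw [← hw, ← mul_assoc, hPu, hF.expS_neg_mul_expS hx, one_mul, hF.logS_expS hy]
  refine ⟨?_, hPu.symm⟩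
  rw [BCHs, hlogy, hPu]
  simp only [y]
  abel
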